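/- arXiv:1812.10475 — 3 statements merged into one kernel-verified Lean document; each statement's English description precedes it below -/
import Mathlib

section
/- For every n ≥ 0: x_{n;θ} = (2/θ)·E[(X₁(n) − θ/2)²] = u_{n;θ} + v_{n;θ} + 2((1−θ)/θ)·w_{n;θ}, and consequently x_{n;θ} ≥ 0. -/
open Finset Filter

namespace Broadcast

/-- The root distribution `π = (θ/2, θ/2, (1-θ)/2, (1-θ)/2)`. -/
noncomputable def rootDist (θ : ℝ) (i : Fin 4) : ℝ :=
  if (i : ℕ) < 2 then θ / 2 else (1 - θ) / 2

/-- The transition matrix `P i j = λ · 1{i=j} + (1-λ) π_j`. -/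
noncomputable def trans (θ lam : ℝ) (i j : Fin 4) : ℝ :=
  (if i = j then lam else 0) + (1 - lam) * rootDist θ j

/-- Vertices at level `n` of the infinite rooted `d`-ary tree, encoded as paths. -/
abbrev Vtx (d n : ℕ) := Fin n → Fin d

/-- Configurations (assignments of states) on level `n`. -/
abbrev Config (d n : ℕ) := Vtx d n → Fin 4

/-- Restriction of a level-`(n+1)` configuration to the subtree of the `j`-th child
of the root. -/
def restrict {d n : ℕ} (j : Fin d) (A : Config d (n + 1)) : Config d n :=
  fun p => A (Fin.cons j p)

/-- `lik θ λ d n i A` is the probability of observing the configuration `A` on level `n`,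
given that the root is in state `i` (the broadcasting process). -/
noncomputable def lik (θ lam : ℝ) (d : ℕ) : (n : ℕ) → Fin 4 → Config d n → ℝ
  | 0, i, A => if A Fin.elim0 = i then 1 else 0
  | n + 1, i, A =>
      ∏ j : Fin d, ∑ k : Fin 4, trans θ lam i k * lik θ lam d n k (restrict j A)

/-- Unconditional probability of observing the configuration `A` on level `n`. -/
noncomputable def marg (θ lam : ℝ) (d n : ℕ) (A : Config d n) : ℝ :=
  ∑ i : Fin 4, rootDist θ i * lik θ lam d n i A

/-- The posterior `f_n(i, A) = P(σ_ρ = i ∣ σ(n) = A)`. -/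
noncomputable def post (θ lam : ℝ) (d n : ℕ) (i : Fin 4) (A : Config d n) : ℝ :=
  rootDist θ i * lik θ lam d n i A / marg θ lam d n A

/-- Expectation of `g(σ(n))` conditioned on the root being in state `r`,
i.e. `E g(σ^r(n))`. -/
noncomputable def condE (θ lam : ℝ) (d n : ℕ) (r : Fin 4) (g : Config d n → ℝ) : ℝ :=
  ∑ A : Config d n, lik θ lam d n r A * g A

/-- Unconditional expectation of `g(σ(n))`. -/
noncomputable def uncondE (θ lam : ℝ) (d n : ℕ) (g : Config d n → ℝ) : ℝ :=
  ∑ A : Config d n, marg θ lam d n A * g A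

/-- `x_{n;θ} = E f_n(1, σ¹(n)) - θ/2`. -/
noncomputable def xT (θ lam : ℝ) (d n : ℕ) : ℝ :=
  condE θ lam d n 0 (fun A => post θ lam d n 0 A) - θ / 2

/-- `y_{n;θ} = E f_n(2, σ¹(n)) - θ/2`. -/
noncomputable def yT (θ lam : ℝ) (d n : ℕ) : ℝ :=
  condE θ lam d n 0 (fun A => post θ lam d n 1 A) - θ / 2

/-- `z_{n;θ} = E f_n(1, σ³(n)) - θ/2`. -/
noncomputable def zT (θ lam : ℝ) (d n : ℕ) : ℝ :=
  condE θ lam d n 2 (fun A => post θ lam d n 0 A) - θ / 2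

/-- `x_{n;1-θ} = E f_n(3, σ³(n)) - (1-θ)/2`. -/
noncomputable def xH (θ lam : ℝ) (d n : ℕ) : ℝ :=
  condE θ lam d n 2 (fun A => post θ lam d n 2 A) - (1 - θ) / 2

/-- `y_{n;1-θ} = E f_n(4, σ³(n)) - (1-θ)/2`. -/
noncomputable def yH (θ lam : ℝ) (d n : ℕ) : ℝ :=
  condE θ lam d n 2 (fun A => post θ lam d n 3 A) - (1 - θ) / 2

/-- `z_{n;1-θ} = E f_n(3, σ¹(n)) - (1-θ)/2`. -/
noncomputable def zH (θ lam : ℝ) (d n : ℕ) : ℝ :=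
  condE θ lam d n 0 (fun A => post θ lam d n 2 A) - (1 - θ) / 2

/-- `u_{n;θ} = E (f_n(1, σ¹(n)) - θ/2)²`. -/
noncomputable def uT (θ lam : ℝ) (d n : ℕ) : ℝ :=
  condE θ lam d n 0 (fun A => (post θ lam d n 0 A - θ / 2) ^ 2)

/-- `v_{n;θ} = E (f_n(2, σ¹(n)) - θ/2)²`. -/
noncomputable def vT (θ lam : ℝ) (d n : ℕ) : ℝ :=
  condE θ lam d n 0 (fun A => (post θ lam d n 1 A - θ / 2) ^ 2)

/-- `w_{n;θ} = E (f_n(1, σ³(n)) - θ/2)²`. -/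
noncomputable def wT (θ lam : ℝ) (d n : ℕ) : ℝ :=
  condE θ lam d n 2 (fun A => (post θ lam d n 0 A - θ / 2) ^ 2)

/-- `w_{n;1-θ} = E (f_n(3, σ¹(n)) - (1-θ)/2)²`. -/
noncomputable def wH (θ lam : ℝ) (d n : ℕ) : ℝ :=
  condE θ lam d n 0 (fun A => (post θ lam d n 2 A - (1 - θ) / 2) ^ 2)

/-- `Y_{ij}(n) = f_n(i, σ_j(n+1))`, viewed as a function of the level-`(n+1)`
configuration. -/
noncomputable def Yf (θ lam : ℝ) (d n : ℕ) (i : Fin 4) (j : Fin d)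
    (A : Config d (n + 1)) : ℝ :=
  post θ lam d n i (restrict j A)

/-- `Z_i(n)`, viewed as a function of the level-`(n+1)` configuration. -/
noncomputable def Zf (θ lam : ℝ) (d n : ℕ) (i : Fin 4) (A : Config d (n + 1)) : ℝ :=
  if (i : ℕ) < 2 then
    ∏ j : Fin d, (1 + (2 * lam / θ) * (Yf θ lam d n i j A - θ / 2))
  else
    ∏ j : Fin d, (1 + (2 * lam / (1 - θ)) * (Yf θ lam d n i j A - (1 - θ) / 2))

/-- `S = (θ/2)Z₁ + (θ/2)Z₂ + ((1-θ)/2)Z₃ + ((1-θ)/2)Z₄`. -/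
noncomputable def Sf (θ lam : ℝ) (d n : ℕ) (A : Config d (n + 1)) : ℝ :=
  θ / 2 * Zf θ lam d n 0 A + θ / 2 * Zf θ lam d n 1 A
    + (1 - θ) / 2 * Zf θ lam d n 2 A + (1 - θ) / 2 * Zf θ lam d n 3 A

/-- Total variation distance between the laws of `σ^i(n)` and `σ^j(n)`. -/
noncomputable def dTV (θ lam : ℝ) (d n : ℕ) (i j : Fin 4) : ℝ :=
  (∑ A : Config d n, |lik θ lam d n i A - lik θ lam d n j A|) / 2

/-- The model is reconstructible if for some pair of root states the total variation
distance between the conditioned level-`n` configurations does not vanish. -/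
def Reconstructible (θ lam : ℝ) (d : ℕ) : Prop :=
  ∃ i j : Fin 4, 0 < Filter.limsup (fun n => dTV θ lam d n i j) Filter.atTop

/-- Probability that the root is in state `i` and the states at the vertices
`v 1, …, v k ∈ L(M)` are `c 1, …, c k`. -/
noncomputable def jointRootEvent (θ lam : ℝ) (d M k : ℕ) (v : Fin k → Vtx d M)
    (c : Fin k → Fin 4) (i : Fin 4) : ℝ :=
  ∑ A : Config d M,
    if ∀ t, A (v t) = c t then rootDist θ i * lik θ lam d M i A else 0

/-- Conditional probability `P(σ_ρ = i ∣ σ_{v t} = c t, 1 ≤ t ≤ k)`. -/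
noncomputable def condRoot (θ lam : ℝ) (d M k : ℕ) (v : Fin k → Vtx d M)
    (c : Fin k → Fin 4) (i : Fin 4) : ℝ :=
  jointRootEvent θ lam d M k v c i / ∑ i' : Fin 4, jointRootEvent θ lam d M k v c i'

/-! Everything follows from Bayes' rule in the form `marg · post i = rootDist i · lik i`, which
turns an expectation under the root-`i` law into one under the marginal. Applied to `post i`
itself it gives `rootDist i · (E post_i(σⁱ) - rootDist i) = E (post_i(σ) - rootDist i)²`, the first
identity and the nonnegativity. Decomposing the marginal expectation over the root state and using
that swapping the states `1 ↔ 2` or `3 ↔ 4` preserves the process gives the second. -/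

section Bayes

variable {θ lam : ℝ} {d : ℕ}

lemma sum_rootDist : ∑ i, rootDist θ i = 1 := by
  simp only [Fin.sum_univ_four, rootDist]
  norm_num
  ring

lemma rootDist_pos (hθ : θ ∈ Set.Ioo (0 : ℝ) 1) (i : Fin 4) : 0 < rootDist θ i := by
  obtain ⟨h0, h1⟩ := hθ
  unfold rootDist
  split <;> linarith

lemma sum_trans (i : Fin 4) : ∑ j, trans θ lam i j = 1 := by
  simp only [Broadcast.trans, sum_add_distrib, sum_ite_eq, mem_univ, if_true, ← mul_sum,
    sum_rootDist]
  ring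

lemma lik_nonneg (hP : ∀ i j : Fin 4, 0 ≤ trans θ lam i j) :
    ∀ (n : ℕ) (i : Fin 4) (A : Config d n), 0 ≤ lik θ lam d n i A
  | 0, i, A => by rw [lik]; positivity
  | n + 1, i, A => by
      rw [lik]
      exact prod_nonneg fun j _ => sum_nonneg fun k _ =>
        mul_nonneg (hP i k) (lik_nonneg hP n k _)

def configEquiv (d n : ℕ) : Config d (n + 1) ≃ (Fin d → Config d n) where
  toFun A j := restrict j A
  invFun B p := B (p 0) (Fin.tail p)
  left_inv A := funext fun p => congrArg A (Fin.cons_self_tail p)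
  right_inv B := by
    funext j p
    simp [restrict, Fin.tail_cons]

lemma sum_prod_restrict {n : ℕ} (F : Fin d → Config d n → ℝ) :
    ∑ A : Config d (n + 1), ∏ j, F j (restrict j A) = ∏ j, ∑ B : Config d n, F j B := by
  rw [prod_univ_sum, Fintype.piFinset_univ]
  exact (configEquiv d n).sum_comp fun B => ∏ j, F j (B j)

lemma sum_lik : ∀ (n : ℕ) (i : Fin 4), ∑ A : Config d n, lik θ lam d n i A = 1
  | 0, i => by
      rw [← (Equiv.funUnique (Vtx d 0) (Fin 4)).symm.sum_comp]
      simp [lik, Equiv.funUnique]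
  | n + 1, i => by
      simp only [lik]
      rw [sum_prod_restrict fun j B => ∑ k, trans θ lam i k * lik θ lam d n k B]
      refine prod_eq_one fun j _ => ?_
      rw [sum_comm]
      simp [← mul_sum, sum_lik n, sum_trans]

lemma sum_marg (n : ℕ) : ∑ A : Config d n, marg θ lam d n A = 1 := by
  simp only [marg]
  rw [sum_comm]
  simp [← mul_sum, sum_lik, sum_rootDist]

lemma marg_nonneg (hθ : θ ∈ Set.Ioo (0 : ℝ) 1) (hP : ∀ i j : Fin 4, 0 ≤ trans θ lam i j)
    (n : ℕ) (A : Config d n) : 0 ≤ marg θ lam d n A :=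
  sum_nonneg fun i _ => mul_nonneg (rootDist_pos hθ i).le (lik_nonneg hP n i A)

lemma post_mul_marg (hθ : θ ∈ Set.Ioo (0 : ℝ) 1) (hP : ∀ i j : Fin 4, 0 ≤ trans θ lam i j)
    (n : ℕ) (i : Fin 4) (A : Config d n) :
    post θ lam d n i A * marg θ lam d n A = rootDist θ i * lik θ lam d n i A := by
  by_cases h : marg θ lam d n A = 0
  · have hterm := (sum_eq_zero_iff_of_nonneg fun k _ =>
      mul_nonneg (rootDist_pos hθ k).le (lik_nonneg hP n k A)).mp h i (mem_univ i)
    rw [h, mul_zero, hterm]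
  · exact div_mul_cancel₀ _ h

lemma uncondE_nonneg (hθ : θ ∈ Set.Ioo (0 : ℝ) 1) (hP : ∀ i j : Fin 4, 0 ≤ trans θ lam i j)
    {n : ℕ} {g : Config d n → ℝ} (hg : 0 ≤ g) : 0 ≤ uncondE θ lam d n g :=
  sum_nonneg fun A _ => mul_nonneg (marg_nonneg hθ hP n A) (hg A)

lemma uncondE_eq_sum_condE (n : ℕ) (g : Config d n → ℝ) :
    uncondE θ lam d n g = ∑ i, rootDist θ i * condE θ lam d n i g := by
  simp only [uncondE, marg, condE, sum_mul, mul_sum, mul_assoc]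
  exact sum_comm

lemma uncondE_post_mul (hθ : θ ∈ Set.Ioo (0 : ℝ) 1) (hP : ∀ i j : Fin 4, 0 ≤ trans θ lam i j)
    (n : ℕ) (i : Fin 4) (g : Config d n → ℝ) :
    uncondE θ lam d n (fun A => post θ lam d n i A * g A)
      = rootDist θ i * condE θ lam d n i g := by
  simp only [uncondE, condE, mul_sum]
  exact sum_congr rfl fun A _ => by
    rw [← mul_assoc, mul_comm (marg θ lam d n A), post_mul_marg hθ hP, mul_assoc]

lemma condE_post_sub_rootDist (hθ : θ ∈ Set.Ioo (0 : ℝ) 1)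
    (hP : ∀ i j : Fin 4, 0 ≤ trans θ lam i j) (n : ℕ) (i : Fin 4) :
    condE θ lam d n i (post θ lam d n i) - rootDist θ i
      = uncondE θ lam d n (fun A => (post θ lam d n i A - rootDist θ i) ^ 2) / rootDist θ i := by
  set p := rootDist θ i
  have hmean := uncondE_post_mul (d := d) hθ hP n i (fun _ => 1)
  have hsq := uncondE_post_mul hθ hP n i (post θ lam d n i)
  have hexpand : ∀ A, marg θ lam d n A * (post θ lam d n i A - p) ^ 2
      = marg θ lam d n A * (post θ lam d n i A * post θ lam d n i A)
        - 2 * p * (marg θ lam d n A * post θ lam d n i A) + p ^ 2 * marg θ lam d n A :=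
    fun A => by ring
  simp only [condE, mul_one, sum_lik] at hmean
  rw [eq_div_iff (rootDist_pos hθ i).ne', uncondE]
  simp only [hexpand, sum_add_distrib, sum_sub_distrib, ← mul_sum, sum_marg]
  rw [← uncondE, ← uncondE, hsq, hmean]
  ring

end Bayes

section Symmetry

variable {θ lam : ℝ} {d : ℕ}

lemma rootDist_swap {a b : Fin 4} (hab : rootDist θ a = rootDist θ b) (j : Fin 4) :
    rootDist θ (Equiv.swap a b j) = rootDist θ j := by
  rcases eq_or_ne j a with rfl | hja
  · rw [Equiv.swap_apply_left, hab]
  rcases eq_or_ne j b with rfl | hjb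
  · rw [Equiv.swap_apply_right, hab]
  · rw [Equiv.swap_apply_of_ne_of_ne hja hjb]

variable (e : Fin 4 ≃ Fin 4) (he : ∀ j, rootDist θ (e j) = rootDist θ j)
include he

lemma trans_perm (i j : Fin 4) : trans θ lam (e i) (e j) = trans θ lam i j := by
  simp [trans, he, e.apply_eq_iff_eq]

lemma lik_perm : ∀ (n : ℕ) (i : Fin 4) (A : Config d n),
    lik θ lam d n (e i) (e ∘ A) = lik θ lam d n i A
  | 0, i, A => by simp [lik, e.apply_eq_iff_eq]
  | n + 1, i, A => by
      simp only [lik]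
      refine prod_congr rfl fun j _ => ?_
      rw [← e.sum_comp]
      exact sum_congr rfl fun k _ => by
        rw [trans_perm e he, ← lik_perm n k (restrict j A)]
        rfl

lemma marg_perm (n : ℕ) (A : Config d n) : marg θ lam d n (e ∘ A) = marg θ lam d n A := by
  rw [marg, ← e.sum_comp]
  exact sum_congr rfl fun i _ => by rw [he, lik_perm e he]

lemma post_perm (n : ℕ) (i : Fin 4) (A : Config d n) :
    post θ lam d n (e i) (e ∘ A) = post θ lam d n i A := by
  rw [post, he, lik_perm e he, marg_perm e he, post]

lemma condE_comp_post_perm (n : ℕ) (r i : Fin 4) (h : ℝ → ℝ) :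
    condE θ lam d n (e r) (fun A => h (post θ lam d n (e i) A))
      = condE θ lam d n r (fun A => h (post θ lam d n i A)) := by
  refine (Fintype.sum_equiv ((Equiv.refl (Vtx d n)).arrowCongr e) _ _ fun A => ?_).symm
  exact congrArg₂ (· * h ·) (lik_perm e he n r A).symm (post_perm e he n i A).symm

end Symmetry

theorem xT_eq_and_nonneg_general (θ lam : ℝ) (hθ : θ ∈ Set.Ioo (0 : ℝ) 1)
    (hP : ∀ i j : Fin 4, 0 ≤ trans θ lam i j) (d : ℕ) (n : ℕ) :
    xT θ lam d n
        = (2 / θ) * uncondE θ lam d n (fun A => (post θ lam d n 0 A - θ / 2) ^ 2) ∧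
    xT θ lam d n
        = uT θ lam d n + vT θ lam d n + 2 * ((1 - θ) / θ) * wT θ lam d n ∧
    0 ≤ xT θ lam d n := by
  have hθ0 : rootDist θ 0 = θ / 2 := by simp [rootDist]
  have hx : xT θ lam d n
      = (2 / θ) * uncondE θ lam d n (fun A => (post θ lam d n 0 A - θ / 2) ^ 2) := by
    rw [xT, ← hθ0, condE_post_sub_rootDist hθ hP, hθ0]
    ring
  have hv : condE θ lam d n 1 (fun A => (post θ lam d n 0 A - θ / 2) ^ 2) = vT θ lam d n := by
    have := condE_comp_post_perm (θ := θ) (lam := lam) (d := d) (Equiv.swap 0 1)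
      (rootDist_swap (by simp [rootDist])) n 0 1 (fun y => (y - θ / 2) ^ 2)
    rwa [Equiv.swap_apply_left, Equiv.swap_apply_right] at this
  have hw : condE θ lam d n 3 (fun A => (post θ lam d n 0 A - θ / 2) ^ 2) = wT θ lam d n := by
    have := condE_comp_post_perm (θ := θ) (lam := lam) (d := d) (Equiv.swap 2 3)
      (rootDist_swap (by simp [rootDist])) n 2 0 (fun y => (y - θ / 2) ^ 2)
    rwa [Equiv.swap_apply_left, Equiv.swap_apply_of_ne_of_ne (by decide) (by decide)] at this
  refine ⟨hx, ?_, hx ▸ mul_nonneg (div_pos two_pos hθ.1).le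
    (uncondE_nonneg hθ hP fun A => sq_nonneg _)⟩
  rw [hx, uncondE_eq_sum_condE, Fin.sum_univ_four, hv, hw]
  change 2 / θ * (rootDist θ 0 * uT θ lam d n + rootDist θ 1 * vT θ lam d n
    + rootDist θ 2 * wT θ lam d n + rootDist θ 3 * wT θ lam d n) = _
  have hθne : θ ≠ 0 := hθ.1.ne'
  simp only [rootDist]
  norm_num
  field_simp
  ring

/-- `x_{n;θ} = (2/θ)·E(X₁(n) - θ/2)² = u_{n;θ} + v_{n;θ} + 2((1-θ)/θ)w_{n;θ}`,
and consequently `x_{n;θ} ≥ 0`. -/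
theorem xT_eq_and_nonneg (θ lam : ℝ) (hθ : θ ∈ Set.Ioo (0 : ℝ) 1) (hlam : |lam| ≤ 1)
    (hP : ∀ i j : Fin 4, 0 ≤ trans θ lam i j) (d : ℕ) (hd : 2 ≤ d) (n : ℕ) :
    xT θ lam d n
        = (2 / θ) * uncondE θ lam d n (fun A => (post θ lam d n 0 A - θ / 2) ^ 2) ∧
    xT θ lam d n
        = uT θ lam d n + vT θ lam d n + 2 * ((1 - θ) / θ) * wT θ lam d n ∧
    0 ≤ xT θ lam d n :=
  xT_eq_and_nonneg_general θ lam hθ hP d n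

end Broadcast
end

section
/- For every n ≥ 0: θ·z_{n;1−θ} = (1−θ)·z_{n;θ}. -/
open Finset Filter

namespace Broadcast

/-- `θ·z_{n;1-θ} = (1-θ)·z_{n;θ}`. -/
theorem z_balance (θ lam : ℝ) (hθ : θ ∈ Set.Ioo (0 : ℝ) 1) (hlam : |lam| ≤ 1)
    (hP : ∀ i j : Fin 4, 0 ≤ trans θ lam i j) (d : ℕ) (hd : 2 ≤ d) (n : ℕ) :
    θ * zH θ lam d n = (1 - θ) * zT θ lam d n := by
  unfold zH zT condE post rootDist
  simp only [Fin.isValue, Fin.val_zero, Fin.val_two, Nat.zero_lt_two, if_true,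
    show ¬((2:ℕ) < 2) by omega, if_false]
  rw [mul_sub, mul_sub, Finset.mul_sum, Finset.mul_sum]
  congr 1
  · exact Finset.sum_congr rfl fun A _ => by ring
  · ring

end Broadcast
end

section
/- For every n ≥ 0: E[(f_n(1, σ¹(n)) − θ/2)(f_n(2, σ¹(n)) − θ/2)] = (θ/2)·y_{n;θ} + (v_{n;θ} − (θ/2)·x_{n;θ}). -/
open Finset Filter

namespace Broadcast

section Aux

variable (θ lam : ℝ) (d : ℕ)

local notation "sw" => Equiv.swap (0 : Fin 4) 1

lemma rootDist_swap_s5 (i : Fin 4) : rootDist θ (sw i) = rootDist θ i := by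
  fin_cases i <;> rfl

lemma trans_swap (i k : Fin 4) : trans θ lam (sw i) (sw k) = trans θ lam i k := by
  simp [trans, rootDist_swap_s5, EmbeddingLike.apply_eq_iff_eq]

lemma lik_swap : ∀ (n : ℕ) (i : Fin 4) (A : Config d n),
    lik θ lam d n i (sw ∘ A) = lik θ lam d n (sw i) A := by
  intro n
  induction n with
  | zero =>
      intro i A
      have hiff : sw (A Fin.elim0) = i ↔ A Fin.elim0 = sw i := by
        constructor
        · intro h; rw [← h, Equiv.swap_apply_self]
        · intro h; rw [h, Equiv.swap_apply_self]
      simp only [lik, Function.comp_apply]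
      by_cases h : A Fin.elim0 = sw i
      · rw [if_pos (hiff.mpr h), if_pos h]
      · rw [if_neg (fun hc => h (hiff.mp hc)), if_neg h]
  | succ n ih =>
      intro i A
      simp only [lik]
      refine Finset.prod_congr rfl fun j _ => ?_
      have hres : restrict j (sw ∘ A) = sw ∘ restrict j A := rfl
      rw [hres]
      calc ∑ k : Fin 4, trans θ lam i k * lik θ lam d n k (sw ∘ restrict j A)
          = ∑ k : Fin 4, trans θ lam i k * lik θ lam d n (sw k) (restrict j A) := by
            refine Finset.sum_congr rfl fun k _ => by rw [ih]
        _ = ∑ k : Fin 4, trans θ lam (sw i) (sw k) * lik θ lam d n (sw k) (restrict j A) := by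
            refine Finset.sum_congr rfl fun k _ => by rw [trans_swap]
        _ = ∑ k : Fin 4, trans θ lam (sw i) k * lik θ lam d n k (restrict j A) :=
            Equiv.sum_comp sw fun k => trans θ lam (sw i) k * lik θ lam d n k (restrict j A)

lemma marg_swap (n : ℕ) (A : Config d n) :
    marg θ lam d n (sw ∘ A) = marg θ lam d n A := by
  unfold marg
  calc ∑ i : Fin 4, rootDist θ i * lik θ lam d n i (sw ∘ A)
      = ∑ i : Fin 4, rootDist θ (sw i) * lik θ lam d n (sw i) A := by
        refine Finset.sum_congr rfl fun i _ => by rw [lik_swap, rootDist_swap_s5]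
    _ = ∑ i : Fin 4, rootDist θ i * lik θ lam d n i A :=
        Equiv.sum_comp sw fun i => rootDist θ i * lik θ lam d n i A

lemma post_swap (n : ℕ) (i : Fin 4) (A : Config d n) :
    post θ lam d n i (sw ∘ A) = post θ lam d n (sw i) A := by
  unfold post
  rw [lik_swap, marg_swap, ← rootDist_swap_s5 θ i]

lemma post_mul_lik (n : ℕ) (A : Config d n) :
    post θ lam d n 0 A * lik θ lam d n 1 A = post θ lam d n 1 A * lik θ lam d n 0 A := by
  unfold post
  have h0 : rootDist θ 0 = θ / 2 := rfl
  have h1 : rootDist θ 1 = θ / 2 := rfl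
  rw [h0, h1]; ring

lemma key_cancel (n : ℕ) :
    ∑ A : Config d n,
      lik θ lam d n 0 A * (post θ lam d n 1 A * (post θ lam d n 0 A - post θ lam d n 1 A)) = 0 := by
  set G : Config d n → ℝ := fun A =>
    lik θ lam d n 0 A * (post θ lam d n 1 A * (post θ lam d n 0 A - post θ lam d n 1 A)) with hG
  let e : Config d n ≃ Config d n := Equiv.piCongrRight fun _ => sw
  have hneg : ∀ A : Config d n, G (e A) = - G A := by
    intro A
    have heA : e A = sw ∘ A := rfl
    have h01 : sw (0 : Fin 4) = 1 := Equiv.swap_apply_left 0 1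
    have h10 : sw (1 : Fin 4) = 0 := Equiv.swap_apply_right 0 1
    simp only [hG, heA, lik_swap, post_swap, h01, h10]
    linear_combination (post θ lam d n 1 A - post θ lam d n 0 A) * post_mul_lik θ lam d n A
  have hcalc : ∑ A : Config d n, G A = - ∑ A : Config d n, G A := by
    calc ∑ A : Config d n, G A = ∑ A : Config d n, G (e A) := (Equiv.sum_comp e G).symm
      _ = ∑ A : Config d n, - G A := Finset.sum_congr rfl fun A _ => hneg A
      _ = - ∑ A : Config d n, G A := by rw [Finset.sum_neg_distrib]
  linarith

end Aux

/-- `E(f_n(1,σ¹(n))-θ/2)(f_n(2,σ¹(n))-θ/2) = (θ/2)y_{n;θ} + (v_{n;θ} - (θ/2)x_{n;θ})`. -/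
theorem cross_moment_12 (θ lam : ℝ) (hθ : θ ∈ Set.Ioo (0 : ℝ) 1) (hlam : |lam| ≤ 1)
    (hP : ∀ i j : Fin 4, 0 ≤ trans θ lam i j) (d : ℕ) (hd : 2 ≤ d) (n : ℕ) :
    condE θ lam d n 0
        (fun A => (post θ lam d n 0 A - θ / 2) * (post θ lam d n 1 A - θ / 2))
      = θ / 2 * yT θ lam d n + (vT θ lam d n - θ / 2 * xT θ lam d n) := by
  set t := θ / 2 with ht
  set l := fun A => lik θ lam d n 0 A with hl
  set p0 := fun A => post θ lam d n 0 A with hp0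
  set p1 := fun A => post θ lam d n 1 A with hp1
  have key := key_cancel θ lam d n
  simp only [condE, xT, yT, vT, condE, ← hl, ← hp0, ← hp1, ← ht] at key ⊢
  have expand : ∀ A : Config d n,
      l A * ((p0 A - t) * (p1 A - t))
        = t * (l A * p1 A) + l A * (p1 A - t) ^ 2 - t * (l A * p0 A)
          + l A * (p1 A * (p0 A - p1 A)) := by
    intro A; ring
  rw [Finset.sum_congr rfl fun A _ => expand A]
  rw [Finset.sum_add_distrib, Finset.sum_sub_distrib, Finset.sum_add_distrib,
    ← Finset.mul_sum, ← Finset.mul_sum, key]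
  ring

end Broadcast
end
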